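/- Let v : 𝒫^n → Δ(C) be an anonymous randomized voting rule that is weakly strategy-proof. Then v is pairwise responsive and pairwise isolated. -/

import Mathlib

open Finset

section VotingPrelims

variable (C : Type) [Fintype C] [DecidableEq C]

/-- A preference ordering over the subset `A` of candidates: a duplicate-free list
enumerating exactly the members of `A`, where earlier entries are more preferred. -/
def PrefOn (A : Finset C) : Type :=
  {l : List C // l.Nodup ∧ l.toFinset = A}

/-- A (full) preference ordering on the whole candidate set. -/
abbrev Pref : Type := PrefOn C Finset.univ

variable {C}

noncomputable instance instFintypePrefOn (A : Finset C) : Fintype (PrefOn C A) :=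
  Fintype.subtype A.toList.permutations.toFinset (by
    intro l
    rw [List.mem_toFinset, List.mem_permutations]
    constructor
    · intro h
      exact ⟨h.nodup_iff.mpr A.nodup_toList,
        by rw [List.toFinset_eq_of_perm _ _ h, Finset.toList_toFinset]⟩
    · rintro ⟨h1, h2⟩
      exact List.perm_of_nodup_nodup_toFinset_eq h1 A.nodup_toList
        (by rw [h2, Finset.toList_toFinset]))

instance instDecidableEqPrefOn (A : Finset C) : DecidableEq (PrefOn C A) := fun P Q =>
  decidable_of_iff (P.1 = Q.1) Subtype.ext_iff.symm

/-- `P.pref x y` means that `x` is strictly preferred to `y` in `P`. -/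
def PrefOn.pref {A : Finset C} (P : PrefOn C A) (x y : C) : Prop :=
  P.1.idxOf x < P.1.idxOf y

theorem Pref.mem_list (P : Pref C) (z : C) : z ∈ P.1 := by
  rw [← List.mem_toFinset, P.2.2]; exact Finset.mem_univ z

/-- The top (most preferred) candidate of a full preference ordering. -/
noncomputable def Pref.top [Nonempty C] (P : Pref C) : C :=
  P.1.head?.getD (Classical.arbitrary C)

/-- The most preferred candidate of `S` according to the full preference `P`. -/
noncomputable def Pref.topOn [Nonempty C] (P : Pref C) (S : Finset C) : C :=
  (P.1.filter (fun z => decide (z ∈ S))).head?.getD (Classical.arbitrary C)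

/-- The number of voters whose top choice is `x`. -/
noncomputable def topCount [Nonempty C] {n : ℕ} (P : Fin n → Pref C) (x : C) : ℕ :=
  (Finset.univ.filter fun i => (P i).top = x).card

/-- The number of voters whose most preferred candidate among `S` is `x`. -/
noncomputable def countTop [Nonempty C] {n : ℕ} (P : Fin n → Pref C) (S : Finset C)
    (x : C) : ℕ :=
  (Finset.univ.filter fun i => (P i).topOn S = x).card

/-- The restriction of a full preference ordering to the subset `A`. -/
def Pref.restrictTo (P : Pref C) (A : Finset C) : PrefOn C A :=
  ⟨P.1.filter (fun z => decide (z ∈ A)), P.2.1.filter _, by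
    ext z
    simp only [List.mem_toFinset, List.mem_filter, decide_eq_true_eq]
    exact ⟨fun h => h.2, fun h => ⟨Pref.mem_list P z, h⟩⟩⟩

/-- `d` is a probability distribution on the candidates. -/
def IsDist (d : C → ℝ) : Prop :=
  (∀ x, 0 ≤ d x) ∧ ∑ x, d x = 1

/-- `d` is a probability distribution on the candidates, supported on `A`. -/
def IsDistOn (A : Finset C) (d : C → ℝ) : Prop :=
  IsDist d ∧ ∀ x ∉ A, d x = 0

/-- `v` is a (randomized) voting rule: it maps every profile to a distribution. -/
def IsVotingRule {A : Finset C} {n : ℕ} (v : (Fin n → PrefOn C A) → C → ℝ) : Prop :=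
  ∀ P, IsDist (v P)

/-- `φ` is a belief, i.e. a probability distribution over preference orderings. -/
def IsBelief {A : Finset C} (φ : PrefOn C A → ℝ) : Prop :=
  (∀ P, 0 ≤ φ P) ∧ ∑ P, φ P = 1

/-- Anonymity: permuting the voters does not change the outcome distribution. -/
def Anonymous {A : Finset C} {n : ℕ} (v : (Fin n → PrefOn C A) → C → ℝ) : Prop :=
  ∀ σ : Equiv.Perm (Fin n), ∀ P : Fin n → PrefOn C A, v (fun i => P (σ i)) = v P

/-- Utilities take values in `[0,1]`. -/
def Utility01 (u : C → ℝ) : Prop := ∀ x, 0 ≤ u x ∧ u x ≤ 1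

/-- The utility function `u` is consistent with the preference ordering `P` on `A`. -/
def ConsistentOn (A : Finset C) (u : C → ℝ) (P : PrefOn C A) : Prop :=
  ∀ x ∈ A, ∀ y ∈ A, (u y < u x ↔ P.pref x y)

/-- The profile in which voter `i` reports `Pi` and the remaining voters report `R`. -/
def combine {A : Finset C} {n : ℕ} (i : Fin n) (Pi : PrefOn C A)
    (R : {j : Fin n // j ≠ i} → PrefOn C A) : Fin n → PrefOn C A :=
  fun j => if h : j = i then Pi else R ⟨j, h⟩

/-- The expected utility of voter `i` when reporting `Pi`, where the remaining `n-1`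
voters' preferences are drawn i.i.d. from the belief `φ`. -/
noncomputable def EU {A : Finset C} {n : ℕ} (v : (Fin n → PrefOn C A) → C → ℝ)
    (u : C → ℝ) (φ : PrefOn C A → ℝ) (i : Fin n) (Pi : PrefOn C A) : ℝ :=
  ∑ R : {j : Fin n // j ≠ i} → PrefOn C A,
    (∏ j, φ (R j)) * ∑ x, v (combine i Pi R) x * u x

/-- Strategy-proofness with respect to a set `Φ` of (i.i.d.) beliefs. -/
def SPwrt {A : Finset C} {n : ℕ} (v : (Fin n → PrefOn C A) → C → ℝ)
    (Φ : Set (PrefOn C A → ℝ)) : Prop :=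
  ∀ i : Fin n, ∀ Pi Pi' : PrefOn C A, ∀ φ ∈ Φ, IsBelief φ →
    ∀ u : C → ℝ, Utility01 u → ConsistentOn A u Pi →
      EU v u φ i Pi' ≤ EU v u φ i Pi

/-- Weak strategy-proofness: strategy-proofness w.r.t. all (i.i.d.) beliefs. -/
def WeaklySP {n : ℕ} (v : (Fin n → Pref C) → C → ℝ) : Prop :=
  SPwrt v Set.univ

/-- `ε`-super-weak unanimity. -/
def SuperWeakUnanimity [Nonempty C] {n : ℕ} (v : (Fin n → Pref C) → C → ℝ) (ε : ℝ) : Prop :=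
  ∀ x : C, ∃ P : Fin n → Pref C, (∀ i, (P i).top = x) ∧ 1 - ε ≤ v P x

/-- `ε`-strong unanimity. -/
def StrongUnanimity [Nonempty C] {n : ℕ} (v : (Fin n → Pref C) → C → ℝ) (ε : ℝ) : Prop :=
  ∀ x : C, ∀ P : Fin n → Pref C, (∀ i, (P i).top = x) → 1 - ε ≤ v P x

/-- `ε`-Pareto efficiency. -/
def ParetoEff {n : ℕ} (v : (Fin n → Pref C) → C → ℝ) (ε : ℝ) : Prop :=
  ∀ x y : C, ∀ P : Fin n → Pref C, (∀ i, (P i).pref x y) → v P y ≤ ε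

/-- An `α`-coarse belief: all probabilities are integer multiples of some `β ≥ α`. -/
def CoarseBelief {A : Finset C} (α : ℝ) (φ : PrefOn C A → ℝ) : Prop :=
  ∃ β : ℝ, α ≤ β ∧ ∀ P, ∃ k : ℤ, φ P = k * β

/-- An `α`-coarse utility function: any two utilities are equal or at least `α` apart. -/
def CoarseUtility (α : ℝ) (u : C → ℝ) : Prop :=
  ∀ x y : C, u x = u y ∨ α ≤ |u x - u y|

/-- Large-scale `ε`-strategy-proofness w.r.t. coarse i.i.d. beliefs, with rate `p`. -/
def LargeScaleSP (v : (n : ℕ) → (Fin n → Pref C) → C → ℝ) (ε : ℕ → ℝ) (p : ℝ → ℝ) : Prop :=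
  ∀ α : ℝ, 0 < α → ∀ n : ℕ, p (1 / α) ≤ (n : ℝ) →
    ∀ i : Fin n, ∀ Pi Pi' : Pref C, ∀ φ : Pref C → ℝ, IsBelief φ → CoarseBelief α φ →
      ∀ u : C → ℝ, Utility01 u → CoarseUtility α u → ConsistentOn Finset.univ u Pi →
        EU (v n) u φ i Pi' - ε n ≤ EU (v n) u φ i Pi

/-- The restriction of a belief to the candidate subset `A`. -/
noncomputable def beliefRestrict (φ : Pref C → ℝ) (A : Finset C) : PrefOn C A → ℝ :=
  fun Q => ∑ P : Pref C, if P.restrictTo A = Q then φ P else 0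

/-- The punishing voting rule: choose a uniform voter, then her `j`-th ranked candidate
with probability proportional to `m - j`. -/
noncomputable def vPunish (n : ℕ) (P : Fin n → Pref C) (x : C) : ℝ :=
  (1 / (n : ℝ)) * ∑ i : Fin n,
    (((Fintype.card C : ℝ) - ((P i).1.idxOf x + 1)) /
      (∑ ℓ ∈ Finset.range (Fintype.card C), ((Fintype.card C : ℝ) - ((ℓ : ℝ) + 1))))

end VotingPrelims

section MorePrelims

variable {C : Type} [Fintype C] [DecidableEq C]

/-- `x` is directly above `y` in the preference ordering `P`. -/
def DirectlyAbove (P : Pref C) (x y : C) : Prop :=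
  P.pref x y ∧ ∀ z : C, z ≠ x → z ≠ y → (P.pref z x ↔ P.pref z y)

/-- The preference obtained from `P` by exchanging the positions of `x` and `y`. -/
def Pref.swapC (P : Pref C) (x y : C) : Pref C :=
  ⟨P.1.map (Equiv.swap x y), P.2.1.map (Equiv.injective _), by
    apply Finset.eq_univ_iff_forall.mpr
    intro z
    rw [List.mem_toFinset, List.mem_map]
    exact ⟨Equiv.swap x y z, Pref.mem_list P _, Equiv.swap_apply_self x y z⟩⟩

/-- Pairwise responsiveness. -/
def PairwiseResponsive {n : ℕ} (v : (Fin n → Pref C) → C → ℝ) : Prop :=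
  ∀ P : Fin n → Pref C, ∀ i : Fin n, ∀ x y : C, DirectlyAbove (P i) x y →
    ∀ z : C, z ≠ x → z ≠ y →
      v (Function.update P i ((P i).swapC x y)) z = v P z

/-- Pairwise isolation. -/
def PairwiseIsolated {n : ℕ} (v : (Fin n → Pref C) → C → ℝ) : Prop :=
  ∀ x y : C, ∀ i : Fin n, ∀ P P' : Fin n → Pref C,
    DirectlyAbove (P i) x y → P' i = P i →
    (∀ j : Fin n, (P j).pref x y ↔ (P' j).pref x y) →
      v (Function.update P' i ((P' i).swapC x y)) y - v P' y
        = v (Function.update P i ((P i).swapC x y)) y - v P y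

/-- The ordering that puts `x` on top, with the rest ordered as in `a`. -/
def prefTopList (a : Pref C) (x : C) : Pref C :=
  ⟨x :: a.1.erase x, by
    rw [List.nodup_cons]
    exact ⟨a.2.1.not_mem_erase, a.2.1.erase x⟩, by
    apply Finset.eq_univ_iff_forall.mpr
    intro z
    rw [List.mem_toFinset, List.mem_cons]
    by_cases hz : z = x
    · exact Or.inl hz
    · exact Or.inr ((List.mem_erase_of_ne hz).mpr (Pref.mem_list a z))⟩

/-- The ordering `a` with `x` moved to the bottom. -/
def prefBotList (a : Pref C) (x : C) : Pref C :=
  ⟨a.1.erase x ++ [x], by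
    rw [List.nodup_append]
    exact ⟨a.2.1.erase x, List.nodup_singleton x,
      fun z hz b hb hzb => absurd hz (by
        rw [hzb, List.mem_singleton.mp hb]; exact a.2.1.not_mem_erase)⟩, by
    apply Finset.eq_univ_iff_forall.mpr
    intro z
    rw [List.mem_toFinset, List.mem_append, List.mem_singleton]
    by_cases hz : z = x
    · exact Or.inr hz
    · exact Or.inl ((List.mem_erase_of_ne hz).mpr (Pref.mem_list a z))⟩

/-- The profile `P⃗^{x,j}`: the first `j` voters rank `x` first followed by the remaining
candidates in the order `a`; the remaining voters use `a` with `x` moved to the bottom. -/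
def profileXJ (a : Pref C) (x : C) (j : ℕ) (n : ℕ) : Fin n → Pref C :=
  fun i => if (i : ℕ) < j then prefTopList a x else prefBotList a x

/-- `v'(x,j)`: the selection probability of `x` on the profile `P⃗^{x,j}`. -/
def vPrime {n : ℕ} (v : (Fin n → Pref C) → C → ℝ) (a : Pref C) (x : C) (j : ℕ) : ℝ :=
  v (profileXJ a x j n) x

/-- One round of repeated-plurality elimination with margin `T`: keep exactly the
candidates of `S` whose top-choice count is within `T` of the highest count. -/
noncomputable def plStep [Nonempty C] {n : ℕ} (P : Fin n → Pref C) (T : ℝ) (S : Finset C) :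
    Finset C :=
  S.filter (fun x => ((S.sup (countTop P S) : ℕ) : ℝ) ≤ (countTop P S x : ℝ) + T)

/-- The set of remaining candidates after repeated-plurality elimination. -/
noncomputable def plFinal [Nonempty C] {n : ℕ} (P : Fin n → Pref C) (T : ℝ) : Finset C :=
  (fun S => plStep P T S)^[Fintype.card C] Finset.univ

/-- The plurality winner among `S`, with ties broken by `tb`. -/
noncomputable def pluralityWinner [Nonempty C] {n : ℕ} (tb : Finset C → C)
    (P : Fin n → Pref C) (S : Finset C) : C :=
  tb (S.filter (fun x => countTop P S x = S.sup (countTop P S)))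

/-- Repeated Plurality Elimination + Plurality Selection. -/
noncomputable def vPl [Nonempty C] (δ : ℝ) (tb : Finset C → C) (n : ℕ)
    (P : Fin n → Pref C) (x : C) : ℝ :=
  if x = pluralityWinner tb P (plFinal P ((n : ℝ) ^ ((1 : ℝ) / 2 + δ))) then 1 else 0

/-- One round of approximate instant-runoff elimination with margin `T`: eliminate the
candidates of `S` whose top-choice count is within `T` of the least count, unless this
would eliminate everyone. -/
noncomputable def irvStep [Nonempty C] {n : ℕ} (P : Fin n → Pref C) (T : ℝ) (S : Finset C) :
    Finset C :=
  if h : S.Nonempty then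
    let E := S.filter (fun x =>
      (countTop P S x : ℝ) ≤ (((S.image (countTop P S)).min' (h.image _) : ℕ) : ℝ) + T)
    if E = S then S else S \ E
  else S

/-- The set of remaining candidates after approximate instant-runoff elimination. -/
noncomputable def irvFinal [Nonempty C] {n : ℕ} (P : Fin n → Pref C) (T : ℝ) : Finset C :=
  (fun S => irvStep P T S)^[Fintype.card C] Finset.univ

/-- Approximate Instant-Runoff Voting. -/
noncomputable def vIrv [Nonempty C] (δ : ℝ) (tb : Finset C → C) (n : ℕ)
    (P : Fin n → Pref C) (x : C) : ℝ :=
  if x = pluralityWinner tb P (irvFinal P ((n : ℝ) ^ ((1 : ℝ) / 2 + δ))) then 1 else 0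

/-- The position (0-indexed rank) of candidate `x` in the ordering `P`. -/
def Pref.rank (P : Pref C) (x : C) : Fin (Fintype.card C) :=
  ⟨P.1.idxOf x, by
    have hx : x ∈ P.1 := Pref.mem_list P x
    have hlen : P.1.length = Fintype.card C := by
      rw [← List.toFinset_card_of_nodup P.2.1, P.2.2, Finset.card_univ]
    rw [← hlen]
    exact List.idxOf_lt_length_of_mem hx⟩

/-- The score of candidate `x` under the positional scoring rule with points vector `pv`. -/
def scoreOf (pv : Fin (Fintype.card C) → ℕ) {n : ℕ} (P : Fin n → Pref C) (x : C) : ℕ :=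
  ∑ i : Fin n, pv ((P i).rank x)

/-- Scoring Rule Elimination + Input-Independent Selection. -/
noncomputable def vScore (δ : ℝ) (pv : Fin (Fintype.card C) → ℕ) (sel : Finset C → C → ℝ)
    (n : ℕ) (P : Fin n → Pref C) (x : C) : ℝ :=
  sel (Finset.univ.filter (fun y =>
    ((Finset.univ.sup (scoreOf pv P) : ℕ) : ℝ) ≤ (scoreOf pv P y : ℝ) + (n : ℝ) ^ ((1 : ℝ) / 2 + δ))) x

end MorePrelims

/-! Responsiveness: let `g w` be the expected change in the probability of `w` when voter `i`
exchanges the adjacent pair `x ≻ y`, the other voters being drawn i.i.d. from `φ`.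
Strategy-proofness makes `∑ u w * g w` nonnegative for utilities consistent with `Pᵢ` and
nonpositive for utilities consistent with the swapped order. Along utilities in which `x` and `y`
are nearly tied the sum is affine in the tie-breaking parameter, so it vanishes at the tie, for
every small shift of `z`; hence `g z = 0`. As a function of `φ`, `g z` is a homogeneous polynomial
whose coefficients are, by anonymity, positive multiples of the changes in the probability of `z`
against the individual profiles of the other voters; vanishing on the simplex, it vanishes on the
open orthant, so all these changes are `0`.

Isolation: by responsiveness and `∑ w, v w = 1`, what `y` gains from voter `i`'s swap is what `x`
loses. An adjacent swap by another voter that does not exchange `x` and `y` fixes the probability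
of whichever of `x`, `y` it does not involve, hence the gain; orderings that agree on `x` versus
`y` are connected by such swaps. -/

namespace Pref

variable {C : Type} [Fintype C] [DecidableEq C]

theorem length_eq (P : Pref C) : P.1.length = Fintype.card C := by
  rw [← List.toFinset_card_of_nodup P.2.1, P.2.2, Finset.card_univ]

theorem idxOf_lt_card (P : Pref C) (a : C) : P.1.idxOf a < Fintype.card C :=
  P.length_eq ▸ List.idxOf_lt_length_of_mem (P.mem_list a)

theorem idxOf_injective (P : Pref C) : Function.Injective P.1.idxOf :=
  fun a _ h => (List.idxOf_inj (P.mem_list a)).1 h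

theorem idxOf_getElem (P : Pref C) (k : ℕ) (hk : k < P.1.length) : P.1.idxOf P.1[k] = k :=
  P.2.1.idxOf_getElem k hk

theorem pref_asymm {P : Pref C} {a b : C} (h : P.pref a b) : ¬P.pref b a :=
  Nat.lt_asymm h

theorem ne_of_pref {P : Pref C} {a b : C} (h : P.pref a b) : a ≠ b := by
  rintro rfl; exact Nat.lt_irrefl _ h

theorem pref_or_pref_of_ne (P : Pref C) {a b : C} (h : a ≠ b) : P.pref a b ∨ P.pref b a :=
  Nat.lt_or_gt_of_ne (P.idxOf_injective.ne h)

instance (P : Pref C) (a b : C) : Decidable (P.pref a b) := Nat.decLt _ _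

instance (P : Pref C) : Trans P.pref P.pref P.pref := ⟨Nat.lt_trans⟩

theorem pairwise_pref (P : Pref C) : P.1.Pairwise P.pref := by
  refine List.pairwise_iff_getElem.2 fun i j hi hj hij => ?_
  rw [PrefOn.pref, P.idxOf_getElem i hi, P.idxOf_getElem j hj]
  exact hij

theorem directlyAbove_iff {P : Pref C} {x y : C} :
    DirectlyAbove P x y ↔ P.1.idxOf y = P.1.idxOf x + 1 := by
  simp only [DirectlyAbove, PrefOn.pref]
  constructor
  · rintro ⟨hxy, hbetween⟩
    by_contra hgap
    have hk : P.1.idxOf x + 1 < P.1.length := by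
      have := P.idxOf_lt_card y; rw [P.length_eq]; omega
    have hw := P.idxOf_getElem _ hk
    have := hbetween P.1[P.1.idxOf x + 1] (by rintro h; rw [h] at hw; omega)
      (by rintro h; rw [h] at hw; omega)
    rw [hw] at this
    omega
  · refine fun h => ⟨by omega, fun w hwx hwy => ?_⟩
    have := P.idxOf_injective.ne hwx
    have := P.idxOf_injective.ne hwy
    omega

theorem idxOf_swapC (P : Pref C) (a b w : C) :
    (P.swapC a b).1.idxOf w = P.1.idxOf (Equiv.swap a b w) := by
  have hk : P.1.idxOf (Equiv.swap a b w) < (P.swapC a b).1.length := by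
    simpa [Pref.swapC] using List.idxOf_lt_length_of_mem (P.mem_list (Equiv.swap a b w))
  have hw : (P.swapC a b).1[P.1.idxOf (Equiv.swap a b w)] = w := by
    simp [Pref.swapC, List.getElem_idxOf]
  rw [← (P.swapC a b).idxOf_getElem _ hk, hw]

theorem pref_swapC_iff {P : Pref C} {a b : C} (hD : DirectlyAbove P a b) {u w : C}
    (h₁ : ¬(u = a ∧ w = b)) (h₂ : ¬(u = b ∧ w = a)) :
    (P.swapC a b).pref u w ↔ P.pref u w := by
  have hadj := directlyAbove_iff.1 hD
  have hinj : ∀ {c d}, P.1.idxOf c = P.1.idxOf d → c = d := fun h => P.idxOf_injective h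
  simp only [PrefOn.pref, idxOf_swapC, Equiv.swap_apply_def]
  split_ifs <;> subst_vars <;> grind

theorem swapC_pref_of_directlyAbove {P : Pref C} {a b : C} (hD : DirectlyAbove P a b) :
    (P.swapC a b).pref b a := by
  simpa only [PrefOn.pref, idxOf_swapC, Equiv.swap_apply_left, Equiv.swap_apply_right] using hD.1

theorem exists_directlyAbove_of_ne {P Q : Pref C} (h : P ≠ Q) :
    ∃ a b, DirectlyAbove P a b ∧ Q.pref b a := by
  by_contra! hno
  have hchain : P.1.IsChain Q.pref := List.isChain_iff_getElem.2 fun k hk => by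
    have hD : DirectlyAbove P P.1[k] P.1[k + 1] := directlyAbove_iff.2 <| by
      rw [P.idxOf_getElem, P.idxOf_getElem]
    exact (Q.pref_or_pref_of_ne (ne_of_pref hD.1)).resolve_right (hno _ _ hD)
  exact h <| Subtype.ext <| List.Perm.eq_of_pairwise
    (fun a b _ _ hab hba => absurd hba (pref_asymm hab)) hchain.pairwise Q.pairwise_pref
    (List.perm_of_nodup_nodup_toFinset_eq P.2.1 Q.2.1 (P.2.2.trans Q.2.2.symm))

def inversions (P Q : Pref C) : Finset (C × C) :=
  {p | P.pref p.1 p.2 ∧ Q.pref p.2 p.1}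

theorem inversions_eq_insert_swapC {P Q : Pref C} {a b : C} (hD : DirectlyAbove P a b)
    (hba : Q.pref b a) : inversions P Q = insert (a, b) (inversions (P.swapC a b) Q) := by
  ext ⟨u, w⟩
  simp only [inversions, Finset.mem_filter, Finset.mem_insert, Finset.mem_univ, true_and,
    Prod.mk.injEq]
  by_cases h₁ : u = a ∧ w = b
  · obtain ⟨rfl, rfl⟩ := h₁
    simp [hD.1, hba]
  by_cases h₂ : u = b ∧ w = a
  · obtain ⟨rfl, rfl⟩ := h₂
    simp [pref_asymm hD.1, pref_asymm hba, ne_of_pref hba]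
  · simp [h₁, pref_swapC_iff hD h₁ h₂]

theorem apply_eq_of_swapC_invariant {α : Type*} (f : Pref C → α) {x y : C}
    (hf : ∀ P a b, DirectlyAbove P a b → ¬(a = x ∧ b = y) → ¬(a = y ∧ b = x) →
      f (P.swapC a b) = f P)
    {P Q : Pref C} (hxy : P.pref x y ↔ Q.pref x y) : f P = f Q := by
  induction hk : #(inversions P Q) using Nat.strong_induction_on generalizing P with
  | _ k ih =>
    rcases eq_or_ne P Q with rfl | hne
    · rfl
    obtain ⟨a, b, hD, hba⟩ := exists_directlyAbove_of_ne hne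
    have hab₁ : ¬(a = x ∧ b = y) := by rintro ⟨rfl, rfl⟩; exact pref_asymm (hxy.1 hD.1) hba
    have hab₂ : ¬(a = y ∧ b = x) := by rintro ⟨rfl, rfl⟩; exact pref_asymm hD.1 (hxy.2 hba)
    have hcard : #(inversions P Q) = #(inversions (P.swapC a b) Q) + 1 := by
      rw [inversions_eq_insert_swapC hD hba, Finset.card_insert_of_notMem]
      simp [inversions, pref_asymm (swapC_pref_of_directlyAbove hD)]
    rw [← hf P a b hD hab₁ hab₂]
    refine ih _ (by omega) ?_ rfl
    rwa [pref_swapC_iff hD (fun h => hab₁ ⟨h.1.symm, h.2.symm⟩)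
      (fun h => hab₂ ⟨h.2.symm, h.1.symm⟩)]

end Pref

section SymmetricPolynomialIdentity

open MvPolynomial

theorem exists_perm_comp_eq_of_card_fiber_eq {J Q : Type*} [Fintype J] [DecidableEq Q]
    (R R₀ : J → Q) (h : ∀ q, #{j | R j = q} = #{j | R₀ j = q}) :
    ∃ σ : Equiv.Perm J, R₀ ∘ σ = R := by
  have e : ∀ q, {j // R j = q} ≃ {j // R₀ j = q} := fun q =>
    Fintype.equivOfCardEq (by simpa only [Fintype.card_subtype] using h q)
  exact ⟨Equiv.ofFiberEquiv e, funext fun j => Equiv.ofFiberEquiv_map e j⟩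

theorem Finsupp.sum_single_one_apply {J Q : Type*} [Fintype J] [DecidableEq Q]
    (R : J → Q) (q : Q) : (∑ j, Finsupp.single (R j) 1 : Q →₀ ℕ) q = #{j | R j = q} := by
  simp [Finsupp.finsetSum_apply, Finsupp.single_apply]

variable {J Q : Type*} [Fintype J] [DecidableEq J] [Fintype Q]

theorem eval_sum_C_mul_prod_X (c : (J → Q) → ℝ) (φ : Q → ℝ) :
    eval φ (∑ R : J → Q, C (c R) * ∏ j, X (R j)) = ∑ R : J → Q, (∏ j, φ (R j)) * c R := by
  simp [map_sum, map_prod, mul_comm]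

theorem coeff_sum_C_mul_prod_X [DecidableEq Q] (c : (J → Q) → ℝ) (m : Q →₀ ℕ) :
    coeff m (∑ R : J → Q, C (c R) * ∏ j, X (R j))
      = ∑ R : J → Q, if ∑ j, Finsupp.single (R j) 1 = m then c R else 0 := by
  simp only [coeff_sum, X, ← monomial_sum_one, C_mul_monomial, mul_one, coeff_monomial]

theorem sum_prod_mul_eq_zero_of_pos [Nonempty Q] (c : (J → Q) → ℝ)
    (h : ∀ φ : Q → ℝ, (∀ q, 0 ≤ φ q) → ∑ q, φ q = 1 → ∑ R : J → Q, (∏ j, φ (R j)) * c R = 0)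
    (φ : Q → ℝ) (hφ : ∀ q, 0 < φ q) : ∑ R : J → Q, (∏ j, φ (R j)) * c R = 0 := by
  set T := ∑ q, φ q
  have hT : 0 < T := Finset.sum_pos (fun q _ => hφ q) univ_nonempty
  have hnorm := h (fun q => φ q / T) (fun q => (div_pos (hφ q) hT).le)
    (by rw [← Finset.sum_div, div_self hT.ne'])
  simpa only [Finset.prod_div_distrib, Finset.prod_const, div_mul_eq_mul_div,
    ← Finset.sum_div, div_eq_zero_iff, pow_eq_zero_iff', hT.ne', false_and, or_false] using hnorm

theorem eq_zero_of_sum_prod_mul_eq_zero [DecidableEq Q] [Nonempty Q] (c : (J → Q) → ℝ)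
    (hsymm : ∀ (σ : Equiv.Perm J) R, c (R ∘ σ) = c R)
    (h : ∀ φ : Q → ℝ, (∀ q, 0 ≤ φ q) → ∑ q, φ q = 1 → ∑ R : J → Q, (∏ j, φ (R j)) * c R = 0)
    (R₀ : J → Q) : c R₀ = 0 := by
  have hp : ∑ R : J → Q, C (c R) * ∏ j, X (R j) = 0 :=
    funext_set (fun _ => Set.Ioi 0) (fun _ => Set.Ioi_infinite 0) fun φ hφ => by
      rw [eval_sum_C_mul_prod_X, map_zero]
      exact sum_prod_mul_eq_zero_of_pos c h φ fun q => hφ q (Set.mem_univ q)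
  have hcoeff := coeff_sum_C_mul_prod_X c (∑ j, Finsupp.single (R₀ j) 1)
  rw [hp, coeff_zero, eq_comm] at hcoeff
  -- The monomial of `R₀` collects exactly the rearrangements `R₀ ∘ σ`, all with coefficient `c R₀`.
  have hclass : ∀ R : J → Q, ∑ j, Finsupp.single (R j) 1 = ∑ j, Finsupp.single (R₀ j) 1 →
      c R = c R₀ := fun R hR => by
    obtain ⟨σ, rfl⟩ := exists_perm_comp_eq_of_card_fiber_eq R R₀ fun q => by
      rw [← Finsupp.sum_single_one_apply, ← Finsupp.sum_single_one_apply, hR]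
    exact hsymm σ R₀
  rw [← Finset.sum_filter, Finset.sum_congr rfl fun R hR => hclass R (Finset.mem_filter.1 hR).2,
    Finset.sum_const, nsmul_eq_mul, mul_eq_zero, Nat.cast_eq_zero, Finset.card_eq_zero] at hcoeff
  exact hcoeff.resolve_left (Finset.nonempty_iff_ne_empty.1 ⟨R₀, by simp⟩)

end SymmetricPolynomialIdentity

open Filter Topology Set in
theorem eq_zero_of_affine_sign_change {B K ε : ℝ} (hε : 0 < ε)
    (hpos : ∀ t ∈ Ioo 0 ε, 0 ≤ B + t * K) (hneg : ∀ t ∈ Ioo (-ε) 0, B + t * K ≤ 0) :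
    B = 0 := by
  have hcont : Continuous fun t : ℝ => B + t * K := by fun_prop
  have hlim : ∀ l : Filter ℝ, l ≤ 𝓝 0 → Tendsto (fun t : ℝ => B + t * K) l (𝓝 B) :=
    fun l hl => by simpa using (hcont.tendsto 0).mono_left hl
  exact le_antisymm
    (le_of_tendsto (hlim _ nhdsWithin_le_nhds)
      (mem_of_superset (Ioo_mem_nhdsLT (neg_neg_of_pos hε)) hneg))
    (ge_of_tendsto (hlim _ nhdsWithin_le_nhds) (mem_of_superset (Ioo_mem_nhdsGT hε) hpos))

section Utilities

variable {C : Type} [Fintype C] [DecidableEq C]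

noncomputable def utilityOfPosition (f : C → ℝ) (w : C) : ℝ :=
  (Fintype.card C - f w) / (Fintype.card C + 1)

theorem utility01_utilityOfPosition {Q : Pref C} {f : C → ℝ}
    (hf : ∀ w, |f w - Q.1.idxOf w| < 1 / 2) : Utility01 (utilityOfPosition f) := by
  intro w
  have hw := abs_lt.1 (hf w)
  have hlt : (Q.1.idxOf w : ℝ) + 1 ≤ Fintype.card C := by exact_mod_cast Q.idxOf_lt_card w
  have hm : (0 : ℝ) < Fintype.card C + 1 := by positivity
  rw [utilityOfPosition, div_le_one hm]
  exact ⟨div_nonneg (by linarith) hm.le, by linarith [(Q.1.idxOf w).cast_nonneg (α := ℝ)]⟩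

theorem consistentOn_utilityOfPosition {Q : Pref C} {f : C → ℝ}
    (hf : ∀ w, |f w - Q.1.idxOf w| < 1 / 2) :
    ConsistentOn Finset.univ (utilityOfPosition f) Q := by
  intro a _ b _
  have hm : (0 : ℝ) < Fintype.card C + 1 := by positivity
  rw [utilityOfPosition, utilityOfPosition, div_lt_div_iff_of_pos_right hm, sub_lt_sub_iff_left,
    PrefOn.pref]
  have ha := abs_lt.1 (hf a)
  have hb := abs_lt.1 (hf b)
  rcases lt_trichotomy (Q.1.idxOf a) (Q.1.idxOf b) with h | h | h
  · have : (Q.1.idxOf a : ℝ) + 1 ≤ Q.1.idxOf b := by exact_mod_cast h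
    exact iff_of_true (by linarith) h
  · rw [Q.idxOf_injective h]; exact iff_of_false (lt_irrefl _) (lt_irrefl _)
  · have : (Q.1.idxOf b : ℝ) + 1 ≤ Q.1.idxOf a := by exact_mod_cast h
    exact iff_of_false (by linarith) (by omega)

/-- The positions in `P`, except that `x` and `y` are moved `1/2 - t` towards each other and `z`
is moved up by `s`: for small `t > 0` this still ranks as `P`, for small `t < 0` as `P` with `x`
and `y` exchanged. -/
noncomputable def perturbedPosition (P : Pref C) (x y z : C) (t s : ℝ) (w : C) : ℝ :=
  P.1.idxOf w + (1 / 2 - t) * ((if w = x then 1 else 0) - (if w = y then 1 else 0))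
    - s * (if w = z then 1 else 0)

theorem perturbedPosition_near {P : Pref C} {x y z : C} (hxy : x ≠ y) (hzx : z ≠ x)
    (hzy : z ≠ y) {t s : ℝ} (ht : t ∈ Set.Ioo 0 (1 / 2)) (hs : |s| < 1 / 2) (w : C) :
    |perturbedPosition P x y z t s w - P.1.idxOf w| < 1 / 2 := by
  obtain ⟨ht₀, ht₁⟩ := ht
  rw [abs_lt] at hs ⊢
  unfold perturbedPosition
  split_ifs <;> subst_vars <;> first | contradiction | (constructor <;> linarith)

theorem perturbedPosition_near_swapC {P : Pref C} {x y z : C} (hD : DirectlyAbove P x y)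
    (hzx : z ≠ x) (hzy : z ≠ y) {t s : ℝ} (ht : t ∈ Set.Ioo (-(1 / 2)) 0) (hs : |s| < 1 / 2)
    (w : C) : |perturbedPosition P x y z t s w - (P.swapC x y).1.idxOf w| < 1 / 2 := by
  obtain ⟨ht₀, ht₁⟩ := ht
  have hxy := Pref.ne_of_pref hD.1
  have hadj : (P.1.idxOf y : ℝ) = P.1.idxOf x + 1 := by exact_mod_cast Pref.directlyAbove_iff.1 hD
  rw [abs_lt] at hs ⊢
  rw [Pref.idxOf_swapC]
  unfold perturbedPosition
  by_cases hwx : w = x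
  · subst hwx
    simp only [↓reduceIte, hxy, hzx.symm, Equiv.swap_apply_left, hadj]
    constructor <;> linarith
  by_cases hwy : w = y
  · subst hwy
    simp only [↓reduceIte, hxy.symm, hzy.symm, Equiv.swap_apply_right, hadj]
    constructor <;> linarith
  rw [Equiv.swap_apply_of_ne_of_ne hwx hwy]
  split_ifs <;> subst_vars <;> first | contradiction | (constructor <;> linarith)

theorem sum_utilityOfPosition_perturbedPosition_mul (P : Pref C) (x y z : C) (t s : ℝ)
    (g : C → ℝ) :
    ∑ w, utilityOfPosition (perturbedPosition P x y z t s) w * g w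
      = ∑ w, utilityOfPosition (perturbedPosition P x y z 0 0) w * g w
        + (t * (g x - g y) + s * g z) / (Fintype.card C + 1) := by
  rw [← sub_eq_iff_eq_add', ← Finset.sum_sub_distrib]
  have hw : ∀ w, utilityOfPosition (perturbedPosition P x y z t s) w * g w
      - utilityOfPosition (perturbedPosition P x y z 0 0) w * g w
      = (t * ((if w = x then g x else 0) - (if w = y then g y else 0))
        + s * (if w = z then g z else 0)) / (Fintype.card C + 1) := fun w => by
    unfold utilityOfPosition perturbedPosition
    split_ifs <;> subst_vars <;> ring
  simp only [hw, ← Finset.sum_div, Finset.sum_add_distrib, ← Finset.mul_sum,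
    Finset.sum_sub_distrib, Finset.sum_ite_eq', Finset.mem_univ, if_true]

theorem apply_eq_zero_of_sum_utility_mul_sign {P : Pref C} {x y z : C}
    (hD : DirectlyAbove P x y) (hzx : z ≠ x) (hzy : z ≠ y) (g : C → ℝ)
    (hP : ∀ u, Utility01 u → ConsistentOn Finset.univ u P → 0 ≤ ∑ w, u w * g w)
    (hswap : ∀ u, Utility01 u → ConsistentOn Finset.univ u (P.swapC x y) →
      ∑ w, u w * g w ≤ 0) :
    g z = 0 := by
  have hxy := Pref.ne_of_pref hD.1
  set m : ℝ := Fintype.card C + 1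
  have hm : 0 < m := by positivity
  set A := ∑ w, utilityOfPosition (perturbedPosition P x y z 0 0) w * g w
  have hsum : ∀ t s, ∑ w, utilityOfPosition (perturbedPosition P x y z t s) w * g w
      = (A + s * g z / m) + t * ((g x - g y) / m) := fun t s => by
    rw [sum_utilityOfPosition_perturbedPosition_mul]; ring
  have hconst : ∀ s, |s| < 1 / 2 → A + s * g z / m = 0 := fun s hs =>
    eq_zero_of_affine_sign_change (by norm_num)
      (fun t ht => hsum t s ▸ hP _
        (utility01_utilityOfPosition (perturbedPosition_near hxy hzx hzy ht hs))
        (consistentOn_utilityOfPosition (perturbedPosition_near hxy hzx hzy ht hs)))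
      (fun t ht => hsum t s ▸ hswap _
        (utility01_utilityOfPosition (perturbedPosition_near_swapC hD hzx hzy ht hs))
        (consistentOn_utilityOfPosition (perturbedPosition_near_swapC hD hzx hzy ht hs)))
  have h₀ := hconst 0 (by norm_num)
  have h₁ := hconst (1 / 4) (by norm_num [abs_of_pos])
  field_simp at h₀ h₁
  linarith

end Utilities

section Responsiveness

variable {C : Type} [DecidableEq C]

noncomputable def outcomeShift [Fintype C] {A : Finset C} {n : ℕ}
    (v : (Fin n → PrefOn C A) → C → ℝ) (φ : PrefOn C A → ℝ) (i : Fin n) (W W' : PrefOn C A)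
    (w : C) : ℝ :=
  ∑ R : {j : Fin n // j ≠ i} → PrefOn C A,
    (∏ j, φ (R j)) * (v (combine i W R) w - v (combine i W' R) w)

theorem EU_sub_EU [Fintype C] {A : Finset C} {n : ℕ} (v : (Fin n → PrefOn C A) → C → ℝ)
    (u : C → ℝ) (φ : PrefOn C A → ℝ) (i : Fin n) (W W' : PrefOn C A) :
    EU v u φ i W - EU v u φ i W' = ∑ w, u w * outcomeShift v φ i W W' w := by
  simp only [EU, outcomeShift, ← Finset.sum_sub_distrib, Finset.mul_sum]
  rw [Finset.sum_comm]
  exact Finset.sum_congr rfl fun w _ => Finset.sum_congr rfl fun R _ => by ring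

theorem combine_comp_perm {A : Finset C} {n : ℕ} {v : (Fin n → PrefOn C A) → C → ℝ}
    (hanon : Anonymous v) (i : Fin n) (W : PrefOn C A) (σ : Equiv.Perm {j : Fin n // j ≠ i})
    (R : {j : Fin n // j ≠ i} → PrefOn C A) :
    v (combine i W (R ∘ σ)) = v (combine i W R) := by
  rw [← hanon (Equiv.Perm.ofSubtype σ) (combine i W R)]
  congr 1
  funext j
  by_cases hj : j = i
  · subst hj
    rw [Equiv.Perm.ofSubtype_apply_of_not_mem σ (by simp)]
    simp [combine]
  · rw [Equiv.Perm.ofSubtype_apply_of_mem σ hj]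
    simp [combine, hj, (σ ⟨j, hj⟩).2]

theorem combine_restrict {A : Finset C} {n : ℕ} (P : Fin n → PrefOn C A) (i : Fin n)
    (W : PrefOn C A) : combine i W (fun j : {j // j ≠ i} => P j) = Function.update P i W := by
  funext j
  by_cases hj : j = i
  · subst hj; simp [combine]
  · simp [combine, hj]

theorem pairwiseResponsive_of_anonymous_of_weaklySP [Fintype C] {n : ℕ}
    {v : (Fin n → Pref C) → C → ℝ} (hanon : Anonymous v) (hsp : WeaklySP v) :
    PairwiseResponsive v := by
  intro P i x y hD z hzx hzy
  have : Nonempty (Pref C) := ⟨P i⟩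
  have hshift : ∀ φ, IsBelief φ → outcomeShift v φ i (P i) ((P i).swapC x y) z = 0 :=
    fun φ hφ => apply_eq_zero_of_sum_utility_mul_sign hD hzx hzy _
      (fun u hu hc => by
        rw [← EU_sub_EU]; exact sub_nonneg.2 (hsp i _ _ φ trivial hφ u hu hc))
      (fun u hu hc => by
        rw [← EU_sub_EU]; exact sub_nonpos.2 (hsp i _ _ φ trivial hφ u hu hc))
  have := eq_zero_of_sum_prod_mul_eq_zero
    (fun R => v (combine i (P i) R) z - v (combine i ((P i).swapC x y) R) z)
    (fun σ R => by simp only [combine_comp_perm hanon])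
    (fun φ h₀ h₁ => hshift φ ⟨h₀, h₁⟩) (fun j => P j)
  rw [combine_restrict, combine_restrict, Function.update_eq_self, sub_eq_zero] at this
  exact this.symm

end Responsiveness

theorem apply_eq_of_forall_update {ι α β : Type*} [Fintype ι] [DecidableEq ι]
    (f : (ι → α) → β) (r : α → α → Prop)
    (hf : ∀ Q j a, r (Q j) a → f (Function.update Q j a) = f Q) {P P' : ι → α}
    (h : ∀ j, r (P' j) (P j)) : f P = f P' := by
  suffices ∀ S : Finset ι, f (S.piecewise P P') = f P' by simpa using this Finset.univ
  intro S
  induction S using Finset.induction_on with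
  | empty => simp
  | insert j S hj ih =>
    rw [Finset.piecewise_insert, hf _ _ _ (Finset.piecewise_eq_of_notMem _ _ _ hj ▸ h j), ih]

section Isolation

variable {C : Type} [Fintype C] [DecidableEq C] {n : ℕ} {v : (Fin n → Pref C) → C → ℝ}

noncomputable def swapGain (v : (Fin n → Pref C) → C → ℝ) (i : Fin n) (W : Pref C) (x y : C)
    (Q : Fin n → Pref C) : ℝ :=
  v (Function.update Q i (W.swapC x y)) y - v (Function.update Q i W) y

theorem PairwiseResponsive.apply_update_swapC (hresp : PairwiseResponsive v)
    {Q : Fin n → Pref C} {j : Fin n} {a b : C} (hD : DirectlyAbove (Q j) a b) {i : Fin n}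
    (hij : i ≠ j) (Z : Pref C) {c : C} (hca : c ≠ a) (hcb : c ≠ b) :
    v (Function.update (Function.update Q j ((Q j).swapC a b)) i Z) c
      = v (Function.update Q i Z) c := by
  have hQj : Function.update Q i Z j = Q j := Function.update_of_ne hij.symm _ _
  have := hresp (Function.update Q i Z) j a b (hQj ▸ hD) c hca hcb
  rw [hQj] at this
  rwa [Function.update_comm hij.symm]

theorem swapGain_eq (hv : IsVotingRule v) (hresp : PairwiseResponsive v) (i : Fin n)
    {W : Pref C} {x y : C} (hD : DirectlyAbove W x y) (Q : Fin n → Pref C) :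
    swapGain v i W x y Q
      = v (Function.update Q i W) x - v (Function.update Q i (W.swapC x y)) x := by
  have hsum :
      ∑ w, (v (Function.update Q i (W.swapC x y)) w - v (Function.update Q i W) w) = 0 := by
    rw [Finset.sum_sub_distrib, (hv _).2, (hv _).2, sub_self]
  rw [Fintype.sum_eq_add x y (Pref.ne_of_pref hD.1) fun w ⟨hwx, hwy⟩ => by
    have := hresp (Function.update Q i W) i x y (by rwa [Function.update_self]) w hwx hwy
    rw [Function.update_self, Function.update_idem] at this
    rw [this, sub_self]] at hsum
  rw [swapGain]
  linarith

theorem swapGain_update_swapC (hv : IsVotingRule v) (hresp : PairwiseResponsive v) {i : Fin n}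
    {W : Pref C} {x y : C} (hD : DirectlyAbove W x y) {Q : Fin n → Pref C} {j : Fin n}
    (hij : i ≠ j) {a b : C} (hab : DirectlyAbove (Q j) a b) (h₁ : ¬(a = x ∧ b = y))
    (h₂ : ¬(a = y ∧ b = x)) :
    swapGain v i W x y (Function.update Q j ((Q j).swapC a b)) = swapGain v i W x y Q := by
  by_cases hy : y = a ∨ y = b
  · have hxy := Pref.ne_of_pref hD.1
    have hxa : x ≠ a := by rintro rfl; rcases hy with rfl | rfl; exacts [hxy rfl, h₁ ⟨rfl, rfl⟩]
    have hxb : x ≠ b := by rintro rfl; rcases hy with rfl | rfl; exacts [h₂ ⟨rfl, rfl⟩, hxy rfl]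
    rw [swapGain_eq hv hresp i hD, swapGain_eq hv hresp i hD,
      hresp.apply_update_swapC hab hij _ hxa hxb, hresp.apply_update_swapC hab hij _ hxa hxb]
  · push Not at hy
    rw [swapGain, swapGain, hresp.apply_update_swapC hab hij _ hy.1 hy.2,
      hresp.apply_update_swapC hab hij _ hy.1 hy.2]

theorem swapGain_update (hv : IsVotingRule v) (hresp : PairwiseResponsive v) {i : Fin n}
    {W : Pref C} {x y : C} (hD : DirectlyAbove W x y) (Q : Fin n → Pref C) (j : Fin n)
    {W' : Pref C} (hxy : (Q j).pref x y ↔ W'.pref x y) :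
    swapGain v i W x y (Function.update Q j W') = swapGain v i W x y Q := by
  rcases eq_or_ne i j with rfl | hij
  · simp only [swapGain, Function.update_idem]
  have hinv := Pref.apply_eq_of_swapC_invariant
    (fun W' => swapGain v i W x y (Function.update Q j W')) (fun P a b hab h₁ h₂ => by
      simpa only [Function.update_self, Function.update_idem] using
        swapGain_update_swapC hv hresp hD hij (Q := Function.update Q j P)
          (by rwa [Function.update_self]) h₁ h₂) hxy
  simpa only [Function.update_eq_self] using hinv.symm

theorem pairwiseIsolated_of_pairwiseResponsive (hv : IsVotingRule v)
    (hresp : PairwiseResponsive v) : PairwiseIsolated v := by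
  intro x y i P P' hD hP'i hxy
  have := apply_eq_of_forall_update (swapGain v i (P i) x y)
    (fun W W' => W.pref x y ↔ W'.pref x y) (fun Q j _ h => swapGain_update hv hresp hD Q j h)
    (fun j => (hxy j).symm)
  have hP' : Function.update P' i (P i) = P' := hP'i ▸ Function.update_eq_self i P'
  rw [hP'i]
  simpa only [swapGain, Function.update_eq_self, hP'] using this.symm

end Isolation

/-- Any anonymous, weakly strategy-proof randomized voting rule is
pairwise responsive and pairwise isolated. -/
theorem stmt1 {C : Type} [Fintype C] [DecidableEq C] {n : ℕ}
    (v : (Fin n → Pref C) → C → ℝ) (hv : IsVotingRule v) (hanon : Anonymous v)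
    (hsp : WeaklySP v) :
    PairwiseResponsive v ∧ PairwiseIsolated v :=
  have hresp := pairwiseResponsive_of_anonymous_of_weaklySP hanon hsp
  ⟨hresp, pairwiseIsolated_of_pairwiseResponsive hv hresp⟩
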